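/- Let Γ be a finite group and M a Γ-lattice. Then M is invertible if and only if Ext^1_Γ(M, C) = 0 for every coflasque Γ-lattice C. -/

import Mathlib

/-! Basic definitions for Γ-lattices over a finite group Γ. -/

/-- A `Γ`-lattice: a finitely generated free `ℤ`-module equipped with a
`ℤ`-linear action of `Γ`, i.e. a `ℤ[Γ]`-module which is finitely generated
and free as a `ℤ`-module. -/
structure GammaLattice (Γ : Type) [Group Γ] where
  carrier : Type
  [isAddCommGroup : AddCommGroup carrier]
  [isModule : Module ℤ carrier]
  ρ : Representation ℤ Γ carrier
  free : Module.Free ℤ carrier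
  finite : Module.Finite ℤ carrier

attribute [instance] GammaLattice.isAddCommGroup GammaLattice.isModule

variable {Γ : Type} [Group Γ]

/-- A `ℤ`-linear map between `Γ`-representations is equivariant (i.e. is a
`ℤ[Γ]`-module homomorphism) if it commutes with the `Γ`-actions. -/
def IsEquivariantMap {M N : Type} [AddCommGroup M] [Module ℤ M]
    [AddCommGroup N] [Module ℤ N]
    (ρM : Representation ℤ Γ M) (ρN : Representation ℤ Γ N)
    (f : M →ₗ[ℤ] N) : Prop :=
  ∀ (γ : Γ) (m : M), f (ρM γ m) = ρN γ (f m)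

/-- A short exact sequence `0 → A → B → C → 0` of `ℤ[Γ]`-modules. -/
def IsShortExactSeq {A B C : Type} [AddCommGroup A] [Module ℤ A]
    [AddCommGroup B] [Module ℤ B] [AddCommGroup C] [Module ℤ C]
    (ρA : Representation ℤ Γ A) (ρB : Representation ℤ Γ B)
    (ρC : Representation ℤ Γ C)
    (f : A →ₗ[ℤ] B) (g : B →ₗ[ℤ] C) : Prop :=
  IsEquivariantMap ρA ρB f ∧ IsEquivariantMap ρB ρC g ∧
    Function.Injective f ∧ Function.Surjective g ∧
    LinearMap.range f = LinearMap.ker g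

/-- A `Γ`-lattice is a permutation lattice if it has a `ℤ`-basis permuted
by `Γ`. -/
def GammaLattice.IsPermutation (L : GammaLattice Γ) : Prop :=
  ∃ (ι : Type) (b : Module.Basis ι ℤ L.carrier),
    ∀ (γ : Γ) (i : ι), ∃ j : ι, L.ρ γ (b i) = b j

/-- A `Γ`-lattice is invertible if it is a direct summand of a permutation
`Γ`-lattice. -/
def GammaLattice.IsInvertible (L : GammaLattice Γ) : Prop :=
  ∃ N : GammaLattice Γ, N.IsPermutation ∧
    ∃ (i : L.carrier →ₗ[ℤ] N.carrier) (p : N.carrier →ₗ[ℤ] L.carrier),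
      IsEquivariantMap L.ρ N.ρ i ∧ IsEquivariantMap N.ρ L.ρ p ∧
        p.comp i = LinearMap.id

/-- A `Γ`-lattice is coflasque if `H¹(Γ', M) = 0` for every subgroup
`Γ' ≤ Γ`. -/
def GammaLattice.IsCoflasque (L : GammaLattice Γ) : Prop :=
  ∀ Γ' : Subgroup Γ,
    Subsingleton (groupCohomology.H1 (Rep.of (L.ρ.comp Γ'.subtype)))

/-- The dual lattice `M^∨ = Hom_ℤ(M, ℤ)` with the action
`(γ · f)(m) = f(γ⁻¹ · m)`. -/
noncomputable def GammaLattice.dual (L : GammaLattice Γ) : GammaLattice Γ where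
  carrier := Module.Dual ℤ L.carrier
  ρ := L.ρ.dual
  free := by have := L.free; have := L.finite; infer_instance
  finite := by have := L.free; have := L.finite; infer_instance

/-- A `Γ`-lattice is flasque if its dual is coflasque. -/
noncomputable def GammaLattice.IsFlasque (L : GammaLattice Γ) : Prop :=
  L.dual.IsCoflasque

/-- `Ext¹_Γ(A, B) = 0`, formulated as: every short exact sequence of
`ℤ[Γ]`-modules `0 → B → E → A → 0` splits (admits an equivariant section). -/
def Ext1Vanishes {A B : Type} [AddCommGroup A] [Module ℤ A]
    [AddCommGroup B] [Module ℤ B]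
    (ρA : Representation ℤ Γ A) (ρB : Representation ℤ Γ B) : Prop :=
  ∀ (E : Type) [AddCommGroup E] [Module ℤ E],
    ∀ (ρE : Representation ℤ Γ E) (ι : B →ₗ[ℤ] E) (π : E →ₗ[ℤ] A),
      IsShortExactSeq ρB ρE ρA ι π →
      ∃ s : A →ₗ[ℤ] E, IsEquivariantMap ρA ρE s ∧ π.comp s = LinearMap.id

/-- The direct sum (product) of two representations. -/
def prodRep {M N : Type} [AddCommGroup M] [Module ℤ M]
    [AddCommGroup N] [Module ℤ N]
    (ρM : Representation ℤ Γ M) (ρN : Representation ℤ Γ N) :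
    Representation ℤ Γ (M × N) where
  toFun γ := (ρM γ).prodMap (ρN γ)
  map_one' := by ext x <;> simp
  map_mul' g h := by ext x <;> simp [Module.End.mul_apply]


/-!
An invertible lattice is a direct summand of a permutation lattice `ℤ[I]`, so for the forward
direction it suffices to lift an equivariant map `ℤ[I] → M` through an extension of `M` by a
coflasque `C`. Since `H¹(Stab i, C) = 0`, the image of each basis vector `i` has a lift fixed by
its stabilizer; translating these lifts along the orbits gives an equivariant lift.

Conversely, let `I` be the disjoint union of the coset spaces `Γ ⧸ H`, one for each generator of
each `Mᴴ`, and map `ℤ[I] → M` by `gH ↦ g • m`. Then `ℤ[I]ᴴ → Mᴴ` is onto for every `H`, and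
`H¹(H, ℤ[I]) = 0` because a cocycle vanishes on stabilizers and so is determined by its values
at orbit representatives. The long exact sequence makes the kernel `K` coflasque, and
`Ext¹(M, K) = 0` splits `ℤ[I] → M`.
-/

universe u

open groupCohomology in
theorem groupCohomology.subsingleton_H1_iff {k G V : Type u} [CommRing k] [Group G]
    [AddCommGroup V] [Module k V] (ρ : Representation k G V) :
    Subsingleton (H1 (Rep.of ρ)) ↔
      ∀ c : G → V, (∀ g h, c (g * h) = ρ g (c h) + c g) → ∃ x : V, ∀ g, c g = ρ g x - x := by
  refine ⟨fun _ c hc => ?_, fun h => subsingleton_of_forall_eq 0 fun y => ?_⟩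
  · have hc' : c ∈ cocycles₁ (Rep.of ρ) := (mem_cocycles₁_iff (A := Rep.of ρ) c).2 hc
    obtain ⟨x, hx⟩ := (H1π_eq_zero_iff (A := Rep.of ρ) ⟨c, hc'⟩).1 (Subsingleton.elim _ _)
    exact ⟨x, fun g => (congrFun hx g).symm⟩
  · induction y using H1_induction_on with
    | h c =>
      obtain ⟨x, hx⟩ := h c ((mem_cocycles₁_iff _).1 c.2)
      exact (H1π_eq_zero_iff _).2 ⟨x, funext fun g => (hx g).symm⟩

namespace MulAction

variable (G : Type*) {X : Type*} [Group G] [MulAction G X]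

noncomputable def orbitRep (x : X) : X :=
  (Quotient.mk'' x : orbitRel.Quotient G X).out

theorem exists_smul_orbitRep (x : X) : ∃ g : G, g • orbitRep G x = x := by
  obtain ⟨g, hg⟩ := orbitRel_apply.1
    (Quotient.exact (Quotient.out_eq (Quotient.mk'' x : orbitRel.Quotient G X)))
  exact ⟨g⁻¹, by rw [orbitRep, ← hg, inv_smul_smul]⟩

noncomputable def fromOrbitRep (x : X) : G :=
  (exists_smul_orbitRep G x).choose

theorem fromOrbitRep_smul_orbitRep (x : X) : fromOrbitRep G x • orbitRep G x = x :=
  (exists_smul_orbitRep G x).choose_spec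

theorem orbitRep_smul (g : G) (x : X) : orbitRep G (g • x) = orbitRep G x :=
  congrArg Quotient.out (Quotient.sound ⟨g, rfl⟩)

theorem fromOrbitRep_inv_mul_mul_mem_stabilizer (g : G) (x : X) :
    (fromOrbitRep G (g • x))⁻¹ * g * fromOrbitRep G x ∈ stabilizer G (orbitRep G x) := by
  rw [mem_stabilizer_iff, mul_smul, mul_smul, fromOrbitRep_smul_orbitRep, inv_smul_eq_iff,
    ← orbitRep_smul G g, fromOrbitRep_smul_orbitRep]

end MulAction

namespace Representation

open MulAction

theorem exists_equivariant_extension {k G V X : Type*} [CommRing k] [Group G]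
    [AddCommGroup V] [Module k V] [MulAction G X] (ρ : Representation k G V) (e : X → V)
    (he : ∀ x, ∀ g ∈ stabilizer G x, ρ g (e x) = e x) :
    ∃ v : X → V, (∀ g x, v (g • x) = ρ g (v x)) ∧ ∀ x, ∃ g y, g • y = x ∧ v x = ρ g (e y) := by
  refine ⟨fun x => ρ (fromOrbitRep G x) (e (orbitRep G x)), fun g x => ?_,
    fun x => ⟨_, _, fromOrbitRep_smul_orbitRep G x, rfl⟩⟩
  have hs := he _ _ (fromOrbitRep_inv_mul_mul_mem_stabilizer G g x)
  dsimp only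
  rw [orbitRep_smul]
  conv_lhs => rw [← hs]
  simp only [← Module.End.mul_apply, ← map_mul]
  group

noncomputable def finsuppOfMulAction (k G X : Type*) [Semiring k] [Monoid G] [MulAction G X] :
    Representation k G (X →₀ k) where
  toFun g := Finsupp.lmapDomain k k (g • ·)
  map_one' := by ext; simp
  map_mul' g h := by ext; simp [mul_smul, Finsupp.mapDomain_single]

section FinsuppOfMulAction

variable {k G X : Type u}

@[simp]
theorem finsuppOfMulAction_single [Semiring k] [Monoid G] [MulAction G X] (g : G) (x : X)
    (r : k) : finsuppOfMulAction k G X g (Finsupp.single x r) = Finsupp.single (g • x) r := by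
  simp [finsuppOfMulAction, Finsupp.mapDomain_single]

@[simp]
theorem finsuppOfMulAction_apply [Semiring k] [Group G] [MulAction G X] (g : G) (f : X →₀ k)
    (x : X) : finsuppOfMulAction k G X g f x = f (g⁻¹ • x) := by
  conv_lhs => rw [← smul_inv_smul g x]
  exact Finsupp.mapDomain_apply (MulAction.injective g) f _

variable [CommRing k] [IsAddTorsionFree k] [Group G] [MulAction G X]

theorem cocycle_apply_eq_zero_of_smul_eq [Finite G] {c : G → X →₀ k}
    (hc : ∀ g h, c (g * h) = finsuppOfMulAction k G X g (c h) + c g) {s : G} {x : X}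
    (hs : s • x = x) : c s x = 0 := by
  have hone : c 1 = 0 := by simpa using hc 1 1
  have hpow (n : ℕ) : c (s ^ n) x = n • c s x := by
    induction n with
    | zero => simp [hone]
    | succ n ih =>
      rw [pow_succ', hc, Finsupp.add_apply, finsuppOfMulAction_apply, inv_smul_eq_iff.2 hs.symm,
        ih, succ_nsmul]
  have h := hpow (orderOf s)
  rw [pow_orderOf_eq_one, hone, Finsupp.zero_apply, eq_comm] at h
  exact (nsmul_eq_zero_iff_right (orderOf_pos s).ne').1 h

theorem subsingleton_H1_finsuppOfMulAction [Finite G] [Finite X] :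
    Subsingleton (groupCohomology.H1 (Rep.of (finsuppOfMulAction k G X))) := by
  refine (groupCohomology.subsingleton_H1_iff _).2 fun c hc => ?_
  have hc' (g h : G) (x : X) : c (g * h) x = c h (g⁻¹ • x) + c g x := by simp [hc g h]
  obtain ⟨b, hb⟩ : ∃ b : X → k, ∀ x, b x = c (fromOrbitRep G x) x := ⟨_, fun _ => rfl⟩
  have hcb (g : G) (x : X) : c g x = b x - b (g⁻¹ • x) := by
    set x' := g⁻¹ • x
    have hx : g • x' = x := smul_inv_smul g x
    have hs := fromOrbitRep_inv_mul_mul_mem_stabilizer G g x'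
    rw [hx] at hs
    set s := (fromOrbitRep G x)⁻¹ * g * fromOrbitRep G x'
    have hs' : fromOrbitRep G x * s = g * fromOrbitRep G x' := by
      simp only [s, mul_assoc, mul_inv_cancel_left]
    have h1 : c (g * fromOrbitRep G x') x = b x' + c g x := by rw [hc', hb]
    have h2 : c (fromOrbitRep G x * s) x = b x := by
      rw [hc', ← hb, inv_smul_eq_iff.2 (fromOrbitRep_smul_orbitRep G x).symm, ← hx,
        orbitRep_smul, cocycle_apply_eq_zero_of_smul_eq hc hs, zero_add]
    rw [hs', h1] at h2
    exact eq_sub_of_add_eq' h2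
  refine ⟨-Finsupp.equivFunOnFinite.symm b, fun g => Finsupp.ext fun x => ?_⟩
  rw [Finsupp.sub_apply, finsuppOfMulAction_apply, hcb]
  simp only [Finsupp.neg_apply, Finsupp.coe_equivFunOnFinite_symm]
  abel

end FinsuppOfMulAction

section OrbitMap

variable {k G V : Type*} [CommRing k] [Group G] [AddCommGroup V] [Module k V]
  (ρ : Representation k G V) {H : Subgroup G} {v : V} (hv : v ∈ invariants (ρ.comp H.subtype))

def orbitMap : G ⧸ H → V :=
  Quotient.lift (fun g => ρ g v) fun a b hab => by
    have hab' : ρ (a⁻¹ * b) v = v := hv ⟨_, QuotientGroup.leftRel_apply.1 hab⟩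
    calc ρ a v = ρ a (ρ (a⁻¹ * b) v) := by rw [hab']
      _ = ρ b v := by rw [← Module.End.mul_apply, ← map_mul, mul_inv_cancel_left]

theorem orbitMap_mk (g : G) : ρ.orbitMap hv (g : G ⧸ H) = ρ g v :=
  rfl

theorem orbitMap_smul (g : G) (q : G ⧸ H) : ρ.orbitMap hv (g • q) = ρ g (ρ.orbitMap hv q) := by
  induction q using QuotientGroup.induction_on with
  | H a =>
    change ρ.orbitMap hv ((g * a : G) : G ⧸ H) = _
    rw [orbitMap_mk, orbitMap_mk, map_mul, Module.End.mul_apply]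

end OrbitMap

end Representation

theorem Module.Basis.isEquivariantMap_constr {I P V : Type} [MulAction Γ I] [AddCommGroup P]
    [Module ℤ P] [AddCommGroup V] [Module ℤ V] {ρP : Representation ℤ Γ P}
    {ρ : Representation ℤ Γ V} (b : Module.Basis I ℤ P) (hb : ∀ g i, ρP g (b i) = b (g • i))
    {v : I → V} (hv : ∀ g i, v (g • i) = ρ g (v i)) : IsEquivariantMap ρP ρ (b.constr ℕ v) := by
  intro g p
  change (b.constr ℕ v ∘ₗ ρP g) p = (ρ g ∘ₗ b.constr ℕ v) p
  congr 1
  refine b.ext fun i => ?_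
  rw [LinearMap.comp_apply, LinearMap.comp_apply, hb, b.constr_basis, b.constr_basis, hv]

theorem GammaLattice.IsPermutation.exists_mulAction {L : GammaLattice Γ} (hL : L.IsPermutation) :
    ∃ (I : Type) (_ : MulAction Γ I) (b : Module.Basis I ℤ L.carrier),
      ∀ g i, L.ρ g (b i) = b (g • i) := by
  obtain ⟨I, b, hb⟩ := hL
  choose σ hσ using hb
  have hσ_mul (g h : Γ) (i : I) : σ (g * h) i = σ g (σ h i) :=
    b.injective (by rw [← hσ, ← hσ, ← hσ, map_mul, Module.End.mul_apply])
  refine ⟨I, { smul := σ, one_smul := fun i => b.injective ?_, mul_smul := hσ_mul }, b, hσ⟩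
  change b (σ 1 i) = b i
  rw [← hσ, map_one, Module.End.one_apply]

section Lifting

variable {E A : Type} [AddCommGroup E] [Module ℤ E] [AddCommGroup A] [Module ℤ A]
  {ρE : Representation ℤ Γ E} {ρA : Representation ℤ Γ A} {π : E →ₗ[ℤ] A}

theorem IsShortExactSeq.exists_invariant_lift {C : Type} [AddCommGroup C] [Module ℤ C]
    {ρC : Representation ℤ Γ C} {ι : C →ₗ[ℤ] E} (hses : IsShortExactSeq ρC ρE ρA ι π)
    (H : Subgroup Γ) (hC : Subsingleton (groupCohomology.H1 (Rep.of (ρC.comp H.subtype))))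
    {a : A} (ha : ∀ h ∈ H, ρA h a = a) : ∃ e, π e = a ∧ ∀ h ∈ H, ρE h e = e := by
  obtain ⟨hι, hπ, hιinj, hπsurj, hexact⟩ := hses
  obtain ⟨e₀, he₀⟩ := hπsurj a
  have hdiff (h : H) : ρE h e₀ - e₀ ∈ LinearMap.range ι := by
    rw [hexact, LinearMap.mem_ker, map_sub, hπ, he₀, ha h h.2, sub_self]
  choose c hc using hdiff
  have hcoc (g h : H) : c (g * h) = ρC.comp H.subtype g (c h) + c g := by
    apply hιinj
    change ι (c (g * h)) = ι (ρC g (c h) + c g)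
    rw [map_add, hι, hc, hc, hc, Subgroup.coe_mul, map_mul, Module.End.mul_apply, map_sub]
    abel
  obtain ⟨x, hx⟩ := (groupCohomology.subsingleton_H1_iff _).1 hC c hcoc
  refine ⟨e₀ - ι x, ?_, fun h hh => ?_⟩
  · rw [map_sub, he₀, sub_eq_self, ← LinearMap.mem_ker, ← hexact]
    exact LinearMap.mem_range_self ι x
  · have hcx : ρE h e₀ - e₀ = ι (ρC h x) - ι x := by
      rw [← hc ⟨h, hh⟩, hx, map_sub]
      rfl
    rw [map_sub, ← hι, sub_eq_sub_iff_sub_eq_sub, hcx]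

open MulAction in
theorem IsShortExactSeq.exists_equivariant_lift_of_basis {C : GammaLattice Γ}
    {ι : C.carrier →ₗ[ℤ] E} (hses : IsShortExactSeq C.ρ ρE ρA ι π) (hC : C.IsCoflasque)
    {I P : Type} [MulAction Γ I] [AddCommGroup P] [Module ℤ P] {ρP : Representation ℤ Γ P}
    (b : Module.Basis I ℤ P) (hb : ∀ g i, ρP g (b i) = b (g • i))
    {f : P →ₗ[ℤ] A} (hf : IsEquivariantMap ρP ρA f) :
    ∃ s : P →ₗ[ℤ] E, IsEquivariantMap ρP ρE s ∧ π ∘ₗ s = f := by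
  have hlift (i : I) : ∃ e, π e = f (b i) ∧ ∀ g ∈ stabilizer Γ i, ρE g e = e :=
    hses.exists_invariant_lift _ (hC _) fun g hg => by rw [← hf, hb, mem_stabilizer_iff.1 hg]
  choose e hπe he using hlift
  obtain ⟨v, hv, hve⟩ := ρE.exists_equivariant_extension e he
  refine ⟨b.constr ℕ v, b.isEquivariantMap_constr hb hv, b.ext fun i => ?_⟩
  obtain ⟨g, j, rfl, hvi⟩ := hve i
  rw [LinearMap.comp_apply, Module.Basis.constr_basis, hvi, hses.2.1, hπe, ← hf, hb]

end Lifting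

theorem GammaLattice.IsInvertible.ext1Vanishes {M C : GammaLattice Γ} (hM : M.IsInvertible)
    (hC : C.IsCoflasque) : Ext1Vanishes M.ρ C.ρ := by
  obtain ⟨N, hN, i, p, hi, hp, hpi⟩ := hM
  obtain ⟨I, _, b, hb⟩ := hN.exists_mulAction
  intro E _ _ ρE ι π hses
  obtain ⟨s, hs, hπs⟩ := hses.exists_equivariant_lift_of_basis hC b hb hp
  refine ⟨s ∘ₗ i, fun g m => ?_, by rw [← LinearMap.comp_assoc, hπs, hpi]⟩
  rw [LinearMap.comp_apply, hi, hs, LinearMap.comp_apply]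

def IsEquivariantMap.kerSubrep {G P V : Type} [Group G] [AddCommGroup P] [Module ℤ P]
    [AddCommGroup V] [Module ℤ V] {ρP : Representation ℤ G P} {ρ : Representation ℤ G V}
    {π : P →ₗ[ℤ] V} (hπ : IsEquivariantMap ρP ρ π) : Subrepresentation ρP where
  toSubmodule := LinearMap.ker π
  apply_mem_toSubmodule g p hp := by rw [LinearMap.mem_ker, hπ, LinearMap.mem_ker.1 hp, map_zero]

namespace GammaLattice

noncomputable def ofMulAction (I : Type) [MulAction Γ I] [Finite I] : GammaLattice Γ where
  carrier := I →₀ ℤ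
  ρ := Representation.finsuppOfMulAction ℤ Γ I
  free := inferInstance
  finite := inferInstance

theorem isPermutation_ofMulAction (I : Type) [MulAction Γ I] [Finite I] :
    (ofMulAction I : GammaLattice Γ).IsPermutation :=
  ⟨I, Finsupp.basisSingleOne, fun g i => ⟨g • i, Representation.finsuppOfMulAction_single g i 1⟩⟩

theorem isCoflasque_ofMulAction (I : Type) [MulAction Γ I] [Finite Γ] [Finite I] :
    (ofMulAction I : GammaLattice Γ).IsCoflasque := fun H =>
  Representation.subsingleton_H1_finsuppOfMulAction (k := ℤ) (G := H) (X := I)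

def ofSubrepresentation (L : GammaLattice Γ) (W : Subrepresentation L.ρ) : GammaLattice Γ where
  carrier := W.toSubmodule
  isModule := W.toSubmodule.module
  ρ := W.toRepresentation
  free := by have := L.free; have := L.finite; infer_instance
  finite := by have := L.free; have := L.finite; infer_instance

theorem isCoflasque_ofSubrepresentation_kerSubrep {P M : GammaLattice Γ}
    {π : P.carrier →ₗ[ℤ] M.carrier} (hπ : IsEquivariantMap P.ρ M.ρ π) (hP : P.IsCoflasque)
    (hlift : ∀ H : Subgroup Γ, Representation.invariants (M.ρ.comp H.subtype) ≤
      (Representation.invariants (P.ρ.comp H.subtype)).map π) :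
    (P.ofSubrepresentation hπ.kerSubrep).IsCoflasque := by
  intro H
  have hPH := hP H
  rw [groupCohomology.subsingleton_H1_iff] at hPH ⊢
  intro c hc
  obtain ⟨y, hy⟩ := hPH (fun g => (c g).1) fun g h => congrArg Subtype.val (hc g h)
  have hπy : π y ∈ Representation.invariants (M.ρ.comp H.subtype) := fun g => by
    have hcg : (c g).1 ∈ LinearMap.ker π := (c g).2
    rw [hy, LinearMap.mem_ker, map_sub, sub_eq_zero, MonoidHom.comp_apply, hπ] at hcg
    exact hcg
  obtain ⟨q, hq, hπq⟩ := hlift H hπy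
  have hyq : y - q ∈ LinearMap.ker π := by rw [LinearMap.mem_ker, map_sub, hπq, sub_self]
  refine ⟨⟨y - q, hyq⟩, fun g => Subtype.ext ?_⟩
  change (c g).1 = P.ρ.comp H.subtype g (y - q) - (y - q)
  rw [hy, map_sub, hq g]
  abel

end GammaLattice

theorem Representation.exists_finsuppOfMulAction_cover [Finite Γ] {V : Type} [AddCommGroup V]
    [Module ℤ V] [Module.Finite ℤ V] (ρ : Representation ℤ Γ V) :
    ∃ (I : Type) (_ : MulAction Γ I) (_ : Finite I) (π : (I →₀ ℤ) →ₗ[ℤ] V),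
      IsEquivariantMap (finsuppOfMulAction ℤ Γ I) ρ π ∧ ∀ H : Subgroup Γ,
        invariants (ρ.comp H.subtype) ≤
          (invariants ((finsuppOfMulAction ℤ Γ I).comp H.subtype)).map π := by
  have hfg (H : Subgroup Γ) :
      ∃ S : Finset V, Submodule.span ℤ S = invariants (ρ.comp H.subtype) :=
    IsNoetherian.noetherian _
  choose S hS using hfg
  have hSinv (H : Subgroup Γ) (v : S H) : (v : V) ∈ invariants (ρ.comp H.subtype) :=
    hS H ▸ Submodule.subset_span v.2
  let I := Σ j : (Σ H : Subgroup Γ, S H), Γ ⧸ j.1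
  let val (x : I) : V := ρ.orbitMap (hSinv x.1.1 x.1.2) x.2
  let π := (Finsupp.basisSingleOne : Module.Basis I ℤ (I →₀ ℤ)).constr ℕ val
  refine ⟨I, inferInstance, inferInstance, π,
    Finsupp.basisSingleOne.isEquivariantMap_constr (by simp) fun g x => orbitMap_smul _ _ g x.2,
    fun H => ?_⟩
  rw [← hS H, Submodule.span_le]
  intro v hv
  refine ⟨Finsupp.single ⟨⟨H, ⟨v, hv⟩⟩, ((1 : Γ) : Γ ⧸ H)⟩ 1, fun h => ?_, ?_⟩
  · have hq : ((h : Γ) : Γ ⧸ H) = ((1 : Γ) : Γ ⧸ H) := QuotientGroup.eq.2 (by simp)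
    rw [MonoidHom.comp_apply, finsuppOfMulAction_single, Sigma.smul_mk,
      MulAction.Quotient.smul_mk, smul_eq_mul, mul_one, Subgroup.coe_subtype, hq]
  · change π (Finsupp.basisSingleOne _) = v
    rw [Module.Basis.constr_basis]
    change ρ 1 v = v
    rw [map_one, Module.End.one_apply]

/-- A Γ-lattice `M` is invertible if and only if
`Ext¹_Γ(M, C) = 0` for every coflasque Γ-lattice `C`. -/
theorem invertible_iff_ext1_into_coflasque_vanishes
    {Γ : Type} [Group Γ] [Finite Γ] (M : GammaLattice Γ) :
    M.IsInvertible ↔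
      ∀ C : GammaLattice Γ, C.IsCoflasque → Ext1Vanishes M.ρ C.ρ := by
  refine ⟨fun hM C hC => hM.ext1Vanishes hC, fun hExt => ?_⟩
  have := M.finite
  obtain ⟨I, _, _, π, hπ, hlift⟩ := M.ρ.exists_finsuppOfMulAction_cover
  let P : GammaLattice Γ := .ofMulAction I
  let K := P.ofSubrepresentation hπ.kerSubrep
  have hK : K.IsCoflasque := GammaLattice.isCoflasque_ofSubrepresentation_kerSubrep hπ
    (GammaLattice.isCoflasque_ofMulAction I) hlift
  have hπsurj : Function.Surjective π := fun m => by
    have hm : m ∈ Representation.invariants (M.ρ.comp (⊥ : Subgroup Γ).subtype) := fun h => by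
      rw [Subsingleton.elim h 1, map_one, Module.End.one_apply]
    obtain ⟨p, -, hp⟩ := hlift ⊥ hm
    exact ⟨p, hp⟩
  obtain ⟨s, hs, hπs⟩ := hExt K hK P.carrier P.ρ (LinearMap.ker π).subtype π
    ⟨fun _ _ => rfl, hπ, Subtype.val_injective, hπsurj, Submodule.range_subtype _⟩
  exact ⟨P, GammaLattice.isPermutation_ofMulAction I, s, π, hs, hπ, hπs⟩
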